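/- For every integer n ≥ 12 that is not a power of 2, the cyclic complexity of the Thue–Morse word satisfies c(n) ≤ 2n − 7. -/

import Mathlib

open Fin.NatCast in
/-- The Thue–Morse sequence: `thueMorse n` is the parity of the number of `1`
digits in the binary representation of `n`. -/
def thueMorse (n : ℕ) : Fin 2 := ((Nat.digits 2 n).sum : Fin 2)

/-- The length-`n` factor of the Thue–Morse word starting at position `i`,
namely `t[i..i+n-1]`. -/
def tmFactor (i n : ℕ) : List (Fin 2) := (List.range n).map (fun k => thueMorse (i + k))

/-- The cyclic complexity of the Thue–Morse word: the number of length-`n`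
factors of the Thue–Morse word, counted up to cyclic rotation (conjugacy). -/
noncomputable def tmCyclicComplexity (n : ℕ) : ℕ :=
  Set.ncard {q : Quotient (List.IsRotated.setoid (Fin 2)) |
    ∃ i : ℕ, q = Quotient.mk (List.IsRotated.setoid (Fin 2)) (tmFactor i n)}

/-!
Every factor of length `n ≥ 1` is conjugate to a factor `t[j..j+n-1]` with `t (j + n) ≠ t j`,
since otherwise all shifts of it would be rotations of it and `t` would be eventually periodic.
Hence `c(n)` is at most the number of factors `t[j..j+n]` of span `n` whose ends differ.

Desubstituting by the Thue–Morse morphism, the number of factors of span `D` whose ends differ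
by `δ` is at most the sum of the corresponding numbers for spans `⌊D/2⌋` and `⌈D/2⌉` and difference
`δ + D mod 2`. By induction from `D = 27` on, this number is at most `2 D`, and at most `2 D - 7`
unless `D = 2 ^ j` (for `δ = 1`) or `D = 3 * 2 ^ j` (for `δ = 0`), since two consecutive spans are
never both exceptional. The start of the induction and the lengths `n < 28` are settled by
computing all factors of length `28`, which occur in the prefix of length `2 ^ 10`.
-/

open Fin.NatCast Fin.CommRing

section ThueMorse

theorem thueMorse_zero : thueMorse 0 = 0 := by
  simp [thueMorse]

theorem thueMorse_two_mul (n : ℕ) : thueMorse (2 * n) = thueMorse n := by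
  rcases Nat.eq_zero_or_pos n with rfl | hn
  · rfl
  · unfold thueMorse
    rw [Nat.digits_def' one_lt_two (by omega)]
    simp [Nat.mul_div_cancel_left _ two_pos]

theorem thueMorse_two_mul_add_one (n : ℕ) : thueMorse (2 * n + 1) = thueMorse n + 1 := by
  unfold thueMorse
  rw [Nat.digits_def' one_lt_two (by omega), show (2 * n + 1) % 2 = 1 by omega,
    show (2 * n + 1) / 2 = n by omega, List.sum_cons, Nat.cast_add, Nat.cast_one, add_comm]

theorem thueMorse_two_mul_add (a n : ℕ) :
    thueMorse (2 * a + n) = thueMorse (a + n / 2) + n := by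
  obtain ⟨e, rfl | rfl⟩ := Nat.even_or_odd' n
  · rw [← mul_add, thueMorse_two_mul, Nat.mul_div_cancel_left _ two_pos]
    push_cast
    simp
  · rw [← add_assoc, ← mul_add, thueMorse_two_mul_add_one, show (2 * e + 1) / 2 = e by omega]
    push_cast
    simp

theorem not_eventually_thueMorse_add_eq (d : ℕ) (hd : 0 < d) (δ : Fin 2) :
    ¬ ∃ N, ∀ j ≥ N, thueMorse (j + d) = thueMorse j + δ := by
  induction d using Nat.strong_induction_on generalizing δ with
  | _ d ih =>
  rintro ⟨N, h⟩
  have h2 : (2 : Fin 2) = 0 := rfl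
  obtain ⟨e, rfl | rfl⟩ := Nat.even_or_odd' d
  · refine ih e (by omega) (by omega) δ ⟨N, fun j hj => ?_⟩
    have := h (2 * j) (by omega)
    rwa [← mul_add, thueMorse_two_mul, thueMorse_two_mul] at this
  rcases Nat.eq_zero_or_pos e with rfl | he
  · -- `t (2 j + 1) = t (2 j) + 1` forces `δ = 1`, and then `t (j + 1) = t j` from `N` on
    have hδ : ∀ δ, (∀ j ≥ N, thueMorse (j + 1) = thueMorse j + δ) → δ = 1 := by
      intro δ h
      have := h (2 * N) (by omega)
      rw [thueMorse_two_mul_add_one, thueMorse_two_mul] at this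
      exact (add_left_cancel this).symm
    refine absurd (hδ 0 fun j hj => ?_) (by decide)
    have := h (2 * j + 1) (by omega)
    rw [show 2 * j + 1 + (2 * 0 + 1) = 2 * (j + 1) by omega, thueMorse_two_mul,
      thueMorse_two_mul_add_one, hδ δ h] at this
    linear_combination this + h2
  · refine ih e (by omega) he (δ + 1) ⟨N, fun j hj => ?_⟩
    have := h (2 * j) (by omega)
    rw [show 2 * j + (2 * e + 1) = 2 * (j + e) + 1 by omega, thueMorse_two_mul_add_one,
      thueMorse_two_mul] at this
    linear_combination this - h2

end ThueMorse

section Factors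

theorem tmFactor_length (i n : ℕ) : (tmFactor i n).length = n := by
  simp [tmFactor]

theorem tmFactor_add (i m n : ℕ) : tmFactor i (m + n) = tmFactor i m ++ tmFactor (i + m) n := by
  simp [tmFactor, List.range_add, add_assoc]

theorem tmFactor_one (i : ℕ) : tmFactor i 1 = [thueMorse i] := by
  simp [tmFactor]

theorem tmFactor_succ_eq_rotate {j n : ℕ} (h : thueMorse (j + n) = thueMorse j) :
    tmFactor (j + 1) n = (tmFactor j n).rotate 1 := by
  rcases n with _ | n
  · rfl
  have hhead : tmFactor j (n + 1) = thueMorse j :: tmFactor (j + 1) n := by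
    rw [add_comm n, tmFactor_add, tmFactor_one]
    rfl
  rw [hhead, List.rotate_cons_succ, List.rotate_zero, tmFactor_add, tmFactor_one, ← h,
    add_assoc, add_comm 1 n]

theorem exists_isRotated_tmFactor_ne (n : ℕ) (hn : 0 < n) (i : ℕ) :
    ∃ j, tmFactor j n ~r tmFactor i n ∧ thueMorse (j + n) ≠ thueMorse j := by
  by_contra! h
  have hrot : ∀ s, tmFactor (i + s) n ~r tmFactor i n := by
    intro s
    induction s with
    | zero => rfl
    | succ s ih =>
      rw [← add_assoc, tmFactor_succ_eq_rotate (h _ ih)]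
      exact (List.IsRotated.forall _ 1).trans ih
  refine not_eventually_thueMorse_add_eq n hn 0 ⟨i, fun j hj => ?_⟩
  obtain ⟨s, rfl⟩ := Nat.exists_eq_add_of_le hj
  rw [add_zero]
  exact h _ (hrot s)

def tmMorphism (w : List (Fin 2)) : List (Fin 2) := w.flatMap fun c => [c, c + 1]

theorem tmMorphism_tmFactor (a k : ℕ) : tmMorphism (tmFactor a k) = tmFactor (2 * a) (2 * k) := by
  induction k with
  | zero => rfl
  | succ k ih =>
    rw [tmFactor_add, tmMorphism, List.flatMap_append, ← tmMorphism, ih, tmFactor_one,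
      mul_add, tmFactor_add, show 2 * 1 = 1 + 1 from rfl, tmFactor_add, tmFactor_one, tmFactor_one,
      ← mul_add, thueMorse_two_mul, thueMorse_two_mul_add_one]
    rfl

theorem tmFactor_two_mul_add {a b m k : ℕ} (h : b + m ≤ 2 * k) :
    tmFactor (2 * a + b) m = ((tmMorphism (tmFactor a k)).drop b).take m := by
  obtain ⟨r, hr⟩ := Nat.exists_eq_add_of_le h
  rw [tmMorphism_tmFactor, hr, add_assoc, tmFactor_add, List.drop_left' (tmFactor_length _ _),
    tmFactor_add, List.take_left' (tmFactor_length _ _)]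

end Factors

section Span

theorem Set.ncard_le_ncard_add_ncard_of_subset_image_union {α β γ : Type*} {s : Set α}
    {t : Set β} {u : Set γ} {f : β → α} {g : γ → α} (ht : t.Finite) (hu : u.Finite)
    (h : s ⊆ f '' t ∪ g '' u) : s.ncard ≤ t.ncard + u.ncard :=
  calc s.ncard ≤ (f '' t ∪ g '' u).ncard :=
        Set.ncard_le_ncard h ((ht.image f).union (hu.image g))
    _ ≤ (f '' t).ncard + (g '' u).ncard := Set.ncard_union_le _ _
    _ ≤ t.ncard + u.ncard := add_le_add (Set.ncard_image_le ht) (Set.ncard_image_le hu)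

def tmSpanFactors (d : ℕ) (δ : Fin 2) : Set (List (Fin 2)) :=
  (tmFactor · (d + 1)) '' {i | thueMorse (i + d) = thueMorse i + δ}

noncomputable def tmSpanCount (d : ℕ) (δ : Fin 2) : ℕ := (tmSpanFactors d δ).ncard

theorem tmSpanFactors_subset_length (d : ℕ) (δ : Fin 2) :
    tmSpanFactors d δ ⊆ {w | w.length = d + 1} := by
  rintro _ ⟨i, -, rfl⟩
  exact tmFactor_length i (d + 1)

theorem tmSpanFactors_finite (d : ℕ) (δ : Fin 2) : (tmSpanFactors d δ).Finite :=
  (List.finite_length_eq (Fin 2) (d + 1)).subset (tmSpanFactors_subset_length d δ)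

theorem tmCyclicComplexity_le_tmSpanCount (n : ℕ) (hn : 0 < n) :
    tmCyclicComplexity n ≤ tmSpanCount n 1 := by
  have hsub : {q : Quotient (List.IsRotated.setoid (Fin 2)) |
      ∃ i : ℕ, q = Quotient.mk (List.IsRotated.setoid (Fin 2)) (tmFactor i n)} ⊆
      (fun w => Quotient.mk (List.IsRotated.setoid (Fin 2)) w.dropLast) '' tmSpanFactors n 1 := by
    rintro _ ⟨i, rfl⟩
    obtain ⟨j, hrot, hne⟩ := exists_isRotated_tmFactor_ne n hn i
    have hj : thueMorse (j + n) = thueMorse j + 1 := by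
      generalize thueMorse (j + n) = x at hne ⊢
      generalize thueMorse j = y at hne ⊢
      revert x y
      decide
    refine ⟨tmFactor j (n + 1), ⟨j, hj, rfl⟩, Quotient.sound ?_⟩
    rwa [tmFactor_add, tmFactor_one, List.dropLast_concat]
  exact (Set.ncard_le_ncard hsub ((tmSpanFactors_finite n 1).image _)).trans
    (Set.ncard_image_le (tmSpanFactors_finite n 1))

/-- A factor starting at `2 a + b` with `b < 2` lies in the image under the morphism of the factor
starting at `a` of span `(D + b) / 2`. -/
theorem tmSpanFactors_subset (D : ℕ) (δ : Fin 2) :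
    tmSpanFactors D δ ⊆
      (fun w => (tmMorphism w).take (D + 1)) '' tmSpanFactors (D / 2) (δ + D) ∪
      (fun w => ((tmMorphism w).drop 1).take (D + 1)) '' tmSpanFactors ((D + 1) / 2) (δ + D) := by
  rintro _ ⟨i, hi, rfl⟩
  have hwin : ∀ b a, b < 2 → i = 2 * a + b → tmFactor i (D + 1) =
      ((tmMorphism (tmFactor a ((D + b) / 2 + 1))).drop b).take (D + 1) := by
    rintro b a hb rfl
    exact tmFactor_two_mul_add (by omega)
  have hspan : ∀ b a, b < 2 → i = 2 * a + b →
      thueMorse (a + (D + b) / 2) = thueMorse a + (δ + D) := by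
    rintro b a hb rfl
    have h : thueMorse (2 * a + (b + D)) = thueMorse (2 * a + b) + δ := by rwa [← add_assoc]
    rw [thueMorse_two_mul_add, thueMorse_two_mul_add, Nat.div_eq_of_lt hb, add_zero,
      add_comm b] at h
    push_cast at h
    have h2 : (2 : Fin 2) = 0 := rfl
    linear_combination h - (D : Fin 2) * h2
  obtain ⟨a, rfl | rfl⟩ := Nat.even_or_odd' i
  · exact Or.inl ⟨_, ⟨a, hspan 0 a two_pos rfl, rfl⟩, (hwin 0 a two_pos rfl).symm⟩
  · exact Or.inr ⟨_, ⟨a, hspan 1 a one_lt_two rfl, rfl⟩, (hwin 1 a one_lt_two rfl).symm⟩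

theorem tmSpanCount_le_add (D : ℕ) (δ : Fin 2) :
    tmSpanCount D δ ≤ tmSpanCount (D / 2) (δ + D) + tmSpanCount ((D + 1) / 2) (δ + D) :=
  Set.ncard_le_ncard_add_ncard_of_subset_image_union (tmSpanFactors_finite _ _)
    (tmSpanFactors_finite _ _) (tmSpanFactors_subset D δ)

end Span

section Codes

theorem Set.ncard_le_length_of_injOn {α β : Type*} {s : Set α} {f : α → β} {l : List β}
    (hf : ∀ a ∈ s, f a ∈ l) (hinj : Set.InjOn f s) : s.ncard ≤ l.length := by
  classical
  calc s.ncard ≤ {b | b ∈ l}.ncard := Set.ncard_le_ncard_of_injOn f hf hinj l.finite_toSet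
    _ = l.toFinset.card := by rw [← List.coe_toFinset, Set.ncard_coe_finset]
    _ ≤ l.length := l.toFinset_card_le

theorem Fin.val_lt_of_mem_map_val {n x : ℕ} {w : List (Fin n)} (hx : x ∈ w.map Fin.val) :
    x < n := by
  obtain ⟨a, -, rfl⟩ := List.mem_map.mp hx
  exact a.is_lt

def wordCode (w : List (Fin 2)) : ℕ := Nat.ofDigits 2 (w.map Fin.val)

theorem wordCode_append (u v : List (Fin 2)) :
    wordCode (u ++ v) = wordCode u + 2 ^ u.length * wordCode v := by
  simp [wordCode, Nat.ofDigits_append]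

theorem wordCode_singleton (a : Fin 2) : wordCode [a] = a := by
  simp [wordCode]

theorem wordCode_lt (w : List (Fin 2)) : wordCode w < 2 ^ w.length := by
  simpa [wordCode] using Nat.ofDigits_lt_base_pow_length one_lt_two
    (l := w.map Fin.val) fun _ => Fin.val_lt_of_mem_map_val

theorem wordCode_append_mod (u v : List (Fin 2)) :
    wordCode (u ++ v) % 2 ^ u.length = wordCode u := by
  rw [wordCode_append, Nat.add_mul_mod_self_left, Nat.mod_eq_of_lt (wordCode_lt u)]

theorem wordCode_append_div (u v : List (Fin 2)) :
    wordCode (u ++ v) / 2 ^ u.length = wordCode v := by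
  rw [wordCode_append, Nat.add_mul_div_left _ _ (by positivity), Nat.div_eq_of_lt (wordCode_lt u),
    zero_add]

theorem wordCode_injective {u v : List (Fin 2)} (hlen : u.length = v.length)
    (h : wordCode u = wordCode v) : u = v :=
  List.map_injective_iff.mpr Fin.val_injective
    (Nat.ofDigits_inj_of_len_eq one_lt_two (by simpa) (fun _ => Fin.val_lt_of_mem_map_val)
      (fun _ => Fin.val_lt_of_mem_map_val) h)

def rotCode (n s x : ℕ) : ℕ := x / 2 ^ s + 2 ^ (n - s) * (x % 2 ^ s)

theorem wordCode_rotate {w : List (Fin 2)} {s : ℕ} (hs : s ≤ w.length) :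
    wordCode (w.rotate s) = rotCode w.length s (wordCode w) := by
  have hlen : (w.take s).length = s := List.length_take_of_le hs
  have hdiv := wordCode_append_div (w.take s) (w.drop s)
  have hmod := wordCode_append_mod (w.take s) (w.drop s)
  rw [List.take_append_drop, hlen] at hdiv hmod
  rw [List.rotate_eq_drop_append_take hs, wordCode_append, List.length_drop, rotCode, hdiv, hmod]

def minRotCode (n x : ℕ) : Option ℕ := ((List.range n).map (rotCode n · x)).min?

theorem exists_minRotCode_eq {w : List (Fin 2)} (hw : w ≠ []) :
    ∃ s, minRotCode w.length (wordCode w) = some (wordCode (w.rotate s)) := by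
  have hne : (List.range w.length).map (rotCode w.length · (wordCode w)) ≠ [] := by
    simpa [List.length_pos_iff] using hw
  obtain ⟨m, hm⟩ := Option.isSome_iff_exists.mp (List.isSome_min?_of_ne_nil hne)
  obtain ⟨s, hs, rfl⟩ := List.mem_map.mp (List.min?_mem hm)
  exact ⟨s, by rw [minRotCode, hm, wordCode_rotate (List.mem_range.mp hs).le]⟩

end Codes

section Prefix

theorem tmMorphism_iterate (k : ℕ) : tmMorphism^[k] [0] = tmFactor 0 (2 ^ k) := by
  induction k with
  | zero => rw [Function.iterate_zero_apply, pow_zero, tmFactor_one, thueMorse_zero]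
  | succ k ih => rw [Function.iterate_succ_apply', ih, tmMorphism_tmFactor, pow_succ', mul_zero]

def tmPrefixCode : ℕ := wordCode (tmMorphism^[10] [0])

theorem wordCode_tmFactor {i n : ℕ} (h : i + n ≤ 2 ^ 10) :
    wordCode (tmFactor i n) = tmPrefixCode / 2 ^ i % 2 ^ n := by
  obtain ⟨r, hr⟩ := Nat.exists_eq_add_of_le h
  have hsplit : tmFactor 0 (2 ^ 10) = tmFactor 0 i ++ (tmFactor i n ++ tmFactor (i + n) r) := by
    rw [hr, add_assoc, tmFactor_add, zero_add, tmFactor_add]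
  have hdiv := wordCode_append_div (tmFactor 0 i) (tmFactor i n ++ tmFactor (i + n) r)
  have hmod := wordCode_append_mod (tmFactor i n) (tmFactor (i + n) r)
  rw [← hsplit, tmFactor_length] at hdiv
  rw [tmFactor_length] at hmod
  rw [tmPrefixCode, tmMorphism_iterate, hdiv, hmod]

theorem exists_tmFactor_two_eq (i : ℕ) : ∃ j ≤ 5, tmFactor j 2 = tmFactor i 2 := by
  rw [show tmFactor i 2 = [thueMorse i, thueMorse (i + 1)] by simp [tmFactor, List.range_succ]]
  generalize thueMorse i = x
  generalize thueMorse (i + 1) = y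
  revert x y
  decide

/-- A factor starting at `2 a + b` lies in the image of the factor of length `n / 2 + 1` starting
at `a`. -/
theorem exists_tmFactor_eq (n : ℕ) (hn : 3 ≤ n) (i : ℕ) :
    ∃ j, j + 25 ≤ 12 * n ∧ tmFactor j n = tmFactor i n := by
  induction n using Nat.strong_induction_on generalizing i with
  | _ n ih =>
  obtain ⟨a, b, hb, rfl⟩ : ∃ a b, b < 2 ∧ i = 2 * a + b :=
    ⟨i / 2, i % 2, Nat.mod_lt _ two_pos, (Nat.div_add_mod i 2).symm⟩
  obtain ⟨j, hj, hfac⟩ :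
      ∃ j, 2 * j + 26 ≤ 12 * n ∧ tmFactor j (n / 2 + 1) = tmFactor a (n / 2 + 1) := by
    rcases Nat.lt_or_ge n 4 with h | h
    · obtain ⟨j, hj, hfac⟩ := exists_tmFactor_two_eq a
      exact ⟨j, by omega, by rwa [show n / 2 + 1 = 2 by omega]⟩
    · obtain ⟨j, hj, hfac⟩ := ih (n / 2 + 1) (by omega) (by omega) a
      exact ⟨j, by omega, hfac⟩
  refine ⟨2 * j + b, by omega, ?_⟩
  rw [tmFactor_two_mul_add (k := n / 2 + 1) (by omega),
    tmFactor_two_mul_add (k := n / 2 + 1) (by omega), hfac]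

/-- By `exists_tmFactor_eq`, every factor of length `28` starts before position `312`, well inside
the prefix of length `2 ^ 10` encoded by `tmPrefixCode`. -/
def tmFactorCodes : List ℕ :=
  ((List.range 312).map fun j => tmPrefixCode / 2 ^ j % 2 ^ 28).eraseDups

theorem wordCode_tmFactor_mem {n : ℕ} (hn : n ≤ 28) (i : ℕ) :
    wordCode (tmFactor i n) ∈ tmFactorCodes.map (· % 2 ^ n) := by
  obtain ⟨j, hj, hfac⟩ := exists_tmFactor_eq 28 (by norm_num) i
  obtain ⟨r, hr⟩ := Nat.exists_eq_add_of_le hn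
  have hpre := wordCode_append_mod (tmFactor i n) (tmFactor (i + n) r)
  rw [← tmFactor_add, ← hr, tmFactor_length, ← hfac, wordCode_tmFactor (by omega)] at hpre
  rw [← hpre]
  exact List.mem_map_of_mem (List.mem_eraseDups.mpr
    (List.mem_map_of_mem (List.mem_range.mpr (by omega))))

end Prefix

section Certificates

def spanCert (d : ℕ) (δ : Fin 2) : ℕ :=
  ((tmFactorCodes.map (· % 2 ^ (d + 1))).filter
    fun x => x / 2 ^ d = (x % 2 + δ.val) % 2).eraseDups.length

theorem tmSpanCount_le_spanCert {d : ℕ} (hd : d < 28) (δ : Fin 2) :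
    tmSpanCount d δ ≤ spanCert d δ := by
  refine Set.ncard_le_length_of_injOn (f := wordCode) ?_ fun u hu v hv huv => wordCode_injective
    ((tmSpanFactors_subset_length d δ hu).trans (tmSpanFactors_subset_length d δ hv).symm) huv
  rintro _ ⟨i, hi, rfl⟩
  have hfirst := wordCode_append_mod (tmFactor i 1) (tmFactor (i + 1) d)
  have hlast := wordCode_append_div (tmFactor i d) (tmFactor (i + d) 1)
  rw [← tmFactor_add, add_comm 1 d, tmFactor_length, pow_one, tmFactor_one,
    wordCode_singleton] at hfirst
  rw [← tmFactor_add, tmFactor_length, tmFactor_one, wordCode_singleton] at hlast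
  rw [List.mem_eraseDups, List.mem_filter]
  refine ⟨wordCode_tmFactor_mem hd i, ?_⟩
  rw [decide_eq_true_iff, hfirst, hlast, (hi : thueMorse (i + d) = _), Fin.val_add]

def cyclicCert (n : ℕ) : ℕ :=
  ((tmFactorCodes.map (· % 2 ^ n)).eraseDups.map (minRotCode n)).eraseDups.length

theorem tmCyclicComplexity_le_cyclicCert {n : ℕ} (hn0 : 0 < n) (hn : n ≤ 28) :
    tmCyclicComplexity n ≤ cyclicCert n := by
  set L := ((tmFactorCodes.map (· % 2 ^ n)).eraseDups.map (minRotCode n)).eraseDups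
  set W := {w : List (Fin 2) | w.length = n ∧ some (wordCode w) ∈ L}
  have hW : W.Finite := (List.finite_length_eq _ n).subset fun w hw => hw.1
  have hsub : {q : Quotient (List.IsRotated.setoid (Fin 2)) |
      ∃ i : ℕ, q = Quotient.mk (List.IsRotated.setoid (Fin 2)) (tmFactor i n)} ⊆
      Quotient.mk (List.IsRotated.setoid (Fin 2)) '' W := by
    rintro _ ⟨i, rfl⟩
    obtain ⟨s, hs⟩ := exists_minRotCode_eq (w := tmFactor i n)
      (List.ne_nil_of_length_pos (by rwa [tmFactor_length]))
    rw [tmFactor_length] at hs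
    refine ⟨(tmFactor i n).rotate s, ⟨by rw [List.length_rotate, tmFactor_length], ?_⟩,
      Quotient.sound (List.IsRotated.forall _ _)⟩
    rw [← hs, List.mem_eraseDups]
    exact List.mem_map_of_mem (List.mem_eraseDups.mpr (wordCode_tmFactor_mem hn i))
  calc tmCyclicComplexity n ≤ (Quotient.mk (List.IsRotated.setoid (Fin 2)) '' W).ncard :=
        Set.ncard_le_ncard hsub (hW.image _)
    _ ≤ W.ncard := Set.ncard_image_le hW
    _ ≤ cyclicCert n := Set.ncard_le_length_of_injOn (f := fun w => some (wordCode w))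
        (fun _ hw => hw.2) fun _ hu _ hv h => wordCode_injective (hu.1.trans hv.1.symm)
          (Option.some_injective _ h)

theorem cyclicCert_add_seven_le :
    ∀ n ∈ List.range' 12 16, n ≠ 16 → cyclicCert n + 7 ≤ 2 * n := by
  decide +kernel

theorem spanCert_add_spanCert_le : ∀ D ∈ List.range' 27 27, ∀ δ : Fin 2,
    spanCert (D / 2) (δ + D) + spanCert ((D + 1) / 2) (δ + D) ≤ 2 * D ∧
    (spanCert (D / 2) (δ + D) + spanCert ((D + 1) / 2) (δ + D) + 7 ≤ 2 * D ∨
      δ = 1 ∧ D = 32 ∨ δ = 0 ∧ D = 48) := by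
  decide +kernel

end Certificates

section Bound

/-- The spans at which `tmSpanCount d δ` may reach `2 d`. -/
def IsSpanPeak (δ : Fin 2) (d : ℕ) : Prop := ∃ j, d = (if δ = 1 then 1 else 3) * 2 ^ j

theorem IsSpanPeak.two_mul {δ : Fin 2} {e : ℕ} (h : IsSpanPeak δ e) :
    IsSpanPeak δ (2 * e) := by
  obtain ⟨j, rfl⟩ := h
  exact ⟨j + 1, by ring⟩

theorem IsSpanPeak.le_three_or_even {δ : Fin 2} {d : ℕ} (h : IsSpanPeak δ d) :
    d ≤ 3 ∨ Even d := by
  obtain ⟨_ | j, rfl⟩ := h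
  · left
    split_ifs <;> simp
  · exact Or.inr ((even_two.mul_left _).mul_left _)

theorem not_isSpanPeak_and_succ {δ : Fin 2} {e : ℕ} (he : 4 ≤ e) :
    ¬ (IsSpanPeak δ e ∧ IsSpanPeak δ (e + 1)) := by
  rintro ⟨h₁, h₂⟩
  rcases h₁.le_three_or_even with h₁ | ⟨r, hr⟩ <;>
    rcases h₂.le_three_or_even with h₂ | ⟨r', hr'⟩ <;> omega

theorem tmSpanCount_le_two_mul_of_lt {D : ℕ} (hD : 27 ≤ D) (hD' : D < 54) (δ : Fin 2) :
    tmSpanCount D δ ≤ 2 * D ∧ (¬ IsSpanPeak δ D → tmSpanCount D δ + 7 ≤ 2 * D) := by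
  have hrec := tmSpanCount_le_add D δ
  have h₁ := tmSpanCount_le_spanCert (d := D / 2) (by omega) (δ + D)
  have h₂ := tmSpanCount_le_spanCert (d := (D + 1) / 2) (by omega) (δ + D)
  obtain ⟨hle, hlt | ⟨rfl, rfl⟩ | ⟨rfl, rfl⟩⟩ :=
    spanCert_add_spanCert_le D (List.mem_range'_1.mpr ⟨hD, by omega⟩) δ
  · exact ⟨by omega, fun _ => by omega⟩
  · exact ⟨by omega, fun h => absurd ⟨5, rfl⟩ h⟩
  · exact ⟨by omega, fun h => absurd ⟨4, rfl⟩ h⟩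

theorem tmSpanCount_le_two_mul {D : ℕ} (hD : 27 ≤ D) (δ : Fin 2) :
    tmSpanCount D δ ≤ 2 * D ∧ (¬ IsSpanPeak δ D → tmSpanCount D δ + 7 ≤ 2 * D) := by
  induction D using Nat.strong_induction_on generalizing δ with
  | _ D ih =>
  rcases Nat.lt_or_ge D 54 with hD' | hD'
  · exact tmSpanCount_le_two_mul_of_lt hD hD' δ
  have hrec := tmSpanCount_le_add D δ
  obtain ⟨e, rfl | rfl⟩ := Nat.even_or_odd' D
  · have hδ : δ + ((2 * e : ℕ) : Fin 2) = δ := by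
      push_cast
      simp
    rw [show 2 * e / 2 = e by omega, show (2 * e + 1) / 2 = e by omega, hδ] at hrec
    obtain ⟨h₁, h₂⟩ := ih e (by omega) (by omega) δ
    exact ⟨by omega, fun hp => by have := h₂ (mt IsSpanPeak.two_mul hp); omega⟩
  · rw [show (2 * e + 1) / 2 = e by omega, show (2 * e + 1 + 1) / 2 = e + 1 by omega] at hrec
    generalize δ + _ = δ' at hrec
    obtain ⟨h₁, h₂⟩ := ih e (by omega) (by omega) δ'
    obtain ⟨h₃, h₄⟩ := ih (e + 1) (by omega) (by omega) δ'
    refine ⟨by omega, fun _ => ?_⟩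
    by_cases hp : IsSpanPeak δ' e
    · have := h₄ fun hp' => not_isSpanPeak_and_succ (by omega) ⟨hp, hp'⟩
      omega
    · have := h₂ hp
      omega

end Bound

theorem tm_cyclic_complexity_upper_bound_strong (n : ℕ) (hn : 12 ≤ n)
    (hpow : ¬ ∃ k : ℕ, n = 2 ^ k) :
    tmCyclicComplexity n ≤ 2 * n - 7 := by
  rcases Nat.lt_or_ge n 28 with hsmall | hlarge
  · have hcert := cyclicCert_add_seven_le n (List.mem_range'_1.mpr ⟨hn, by omega⟩)
      fun h => hpow ⟨4, h⟩
    have := tmCyclicComplexity_le_cyclicCert (n := n) (by omega) (by omega)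
    omega
  · have hpeak : ¬ IsSpanPeak 1 n := fun ⟨j, hj⟩ => hpow ⟨j, by simpa using hj⟩
    have := (tmSpanCount_le_two_mul (by omega) 1).2 hpeak
    have := tmCyclicComplexity_le_tmSpanCount n (by omega)
    omega
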